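/- arXiv:1912.09928 — 3 statements merged into one kernel-verified Lean document; each statement's English description precedes it below -/
import Mathlib

section
/- (Kolmogorov–Lamperti estimates for tightness.) ℙ-almost surely there exists a finite constant C = C(ω) such that for all n ≥ 1 and all s, t ∈ [0,2π], E_X[ (g_n(t) − g_n(s))² ] ≤ C·(t − s)² and E_X[ (g_n′(t) − g_n′(s))² ] ≤ C·(t − s)², where g_n′ denotes the derivative of g_n with respect to t. -/
open MeasureTheory ProbabilityTheory Filter Real

/-- The random trigonometric polynomial
`f_n(t) = n^{-1/2} ∑_{k=1}^n (a_k cos(kt) + b_k sin(kt))` for given coefficients. -/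
noncomputable def trigPoly (a b : ℕ → ℝ) (n : ℕ) (t : ℝ) : ℝ :=
  (Real.sqrt n)⁻¹ * ∑ k ∈ Finset.Icc 1 n, (a k * Real.cos (k * t) + b k * Real.sin (k * t))


set_option maxHeartbeats 1000000

lemma sin_int_mul_two_pi (m : ℤ) : Real.sin ((m:ℝ) * (2*π)) = 0 := by
  have : (m:ℝ) * (2*π) = ((2*m : ℤ):ℝ) * π := by push_cast; ring
  rw [this, Real.sin_int_mul_pi]

lemma integral_cos_int (m : ℤ) (hm : m ≠ 0) :
    ∫ x in (0:ℝ)..(2*π), Real.cos (m * x) = 0 := by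
  have hm' : (m:ℝ) ≠ 0 := Int.cast_ne_zero.2 hm
  rw [intervalIntegral.integral_comp_mul_left Real.cos hm']
  simp [sin_int_mul_two_pi]

lemma integral_sin_int (m : ℤ) :
    ∫ x in (0:ℝ)..(2*π), Real.sin (m * x) = 0 := by
  rcases eq_or_ne m 0 with rfl | hm
  · simp
  have hm' : (m:ℝ) ≠ 0 := Int.cast_ne_zero.2 hm
  rw [intervalIntegral.integral_comp_mul_left Real.sin hm']
  simp [Real.cos_int_mul_two_pi]

lemma cos_mul_cos_eq (a b : ℝ) : Real.cos a * Real.cos b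
    = (Real.cos (a - b) + Real.cos (a + b)) / 2 := by
  rw [Real.cos_sub, Real.cos_add]; ring

lemma sin_mul_sin_eq (a b : ℝ) : Real.sin a * Real.sin b
    = (Real.cos (a - b) - Real.cos (a + b)) / 2 := by
  rw [Real.cos_sub, Real.cos_add]; ring

lemma sin_mul_cos_eq (a b : ℝ) : Real.sin a * Real.cos b
    = (Real.sin (a + b) + Real.sin (a - b)) / 2 := by
  rw [Real.sin_sub, Real.sin_add]; ring

lemma ii_cos (m : ℝ) : IntervalIntegrable (fun x => Real.cos (m*x)) MeasureTheory.volume 0 (2*π) :=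
  (Real.continuous_cos.comp (continuous_const.mul continuous_id)).intervalIntegrable _ _

lemma ii_sin (m : ℝ) : IntervalIntegrable (fun x => Real.sin (m*x)) MeasureTheory.volume 0 (2*π) :=
  (Real.continuous_sin.comp (continuous_const.mul continuous_id)).intervalIntegrable _ _

lemma orth_cc (j k : ℕ) (hj : 1 ≤ j) (hk : 1 ≤ k) :
    ∫ x in (0:ℝ)..(2*π), Real.cos (j*x) * Real.cos (k*x)
      = if j = k then π else 0 := by
  have hpt : ∀ x : ℝ, Real.cos (j*x) * Real.cos (k*x)
      = (Real.cos ((((j:ℤ)-k : ℤ):ℝ)*x) + Real.cos ((((j:ℤ)+k : ℤ):ℝ)*x)) / 2 := by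
    intro x
    rw [show ((((j:ℤ)-k : ℤ):ℝ))*x = (j:ℝ)*x - (k:ℝ)*x by push_cast; ring,
      show ((((j:ℤ)+k : ℤ):ℝ))*x = (j:ℝ)*x + (k:ℝ)*x by push_cast; ring]
    exact cos_mul_cos_eq _ _
  rw [intervalIntegral.integral_congr (g := fun x => (Real.cos ((((j:ℤ)-k : ℤ):ℝ)*x) + Real.cos ((((j:ℤ)+k : ℤ):ℝ)*x)) / 2) (fun x _ => hpt x)]
  rw [intervalIntegral.integral_div, intervalIntegral.integral_add (ii_cos _) (ii_cos _)]
  have hsum : ((j:ℤ)+k) ≠ 0 := by positivity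
  rcases eq_or_ne j k with rfl | hne
  · simp only [sub_self, Int.cast_zero, zero_mul, Real.cos_zero, if_pos rfl]
    rw [integral_cos_int _ hsum, intervalIntegral.integral_const]
    simp
  · have hd : ((j:ℤ)-k) ≠ 0 := sub_ne_zero.2 (by exact_mod_cast hne)
    rw [integral_cos_int _ hd, integral_cos_int _ hsum, if_neg hne]
    norm_num

lemma orth_ss (j k : ℕ) (hj : 1 ≤ j) (hk : 1 ≤ k) :
    ∫ x in (0:ℝ)..(2*π), Real.sin (j*x) * Real.sin (k*x)
      = if j = k then π else 0 := by
  have hpt : ∀ x : ℝ, Real.sin (j*x) * Real.sin (k*x)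
      = (Real.cos ((((j:ℤ)-k : ℤ):ℝ)*x) - Real.cos ((((j:ℤ)+k : ℤ):ℝ)*x)) / 2 := by
    intro x
    rw [show ((((j:ℤ)-k : ℤ):ℝ))*x = (j:ℝ)*x - (k:ℝ)*x by push_cast; ring,
      show ((((j:ℤ)+k : ℤ):ℝ))*x = (j:ℝ)*x + (k:ℝ)*x by push_cast; ring]
    exact sin_mul_sin_eq _ _
  rw [intervalIntegral.integral_congr (g := fun x => (Real.cos ((((j:ℤ)-k : ℤ):ℝ)*x) - Real.cos ((((j:ℤ)+k : ℤ):ℝ)*x)) / 2) (fun x _ => hpt x)]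
  rw [intervalIntegral.integral_div, intervalIntegral.integral_sub (ii_cos _) (ii_cos _)]
  have hsum : ((j:ℤ)+k) ≠ 0 := by positivity
  rcases eq_or_ne j k with rfl | hne
  · simp only [sub_self, Int.cast_zero, zero_mul, Real.cos_zero, if_pos rfl]
    rw [integral_cos_int _ hsum, intervalIntegral.integral_const]
    simp
  · have hd : ((j:ℤ)-k) ≠ 0 := sub_ne_zero.2 (by exact_mod_cast hne)
    rw [integral_cos_int _ hd, integral_cos_int _ hsum, if_neg hne]
    norm_num

lemma orth_sc (j k : ℕ) :
    ∫ x in (0:ℝ)..(2*π), Real.sin (j*x) * Real.cos (k*x) = 0 := by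
  have hpt : ∀ x : ℝ, Real.sin (j*x) * Real.cos (k*x)
      = (Real.sin ((((j:ℤ)+k : ℤ):ℝ)*x) + Real.sin ((((j:ℤ)-k : ℤ):ℝ)*x)) / 2 := by
    intro x
    rw [show ((((j:ℤ)-k : ℤ):ℝ))*x = (j:ℝ)*x - (k:ℝ)*x by push_cast; ring,
      show ((((j:ℤ)+k : ℤ):ℝ))*x = (j:ℝ)*x + (k:ℝ)*x by push_cast; ring]
    exact sin_mul_cos_eq _ _
  rw [intervalIntegral.integral_congr (g := fun x => (Real.sin ((((j:ℤ)+k : ℤ):ℝ)*x) + Real.sin ((((j:ℤ)-k : ℤ):ℝ)*x)) / 2) (fun x _ => hpt x)]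
  rw [intervalIntegral.integral_div, intervalIntegral.integral_add (ii_sin _) (ii_sin _),
    integral_sin_int, integral_sin_int]
  norm_num

lemma key_term (c d : ℕ → ℝ) (j k : ℕ) (hj : 1 ≤ j) (hk : 1 ≤ k) :
    ∫ x in (0:ℝ)..(2*π),
      (c j * Real.cos (j*x) + d j * Real.sin (j*x)) * (c k * Real.cos (k*x) + d k * Real.sin (k*x))
      = if j = k then π * ((c j)^2 + (d j)^2) else 0 := by
  have hcc := ii_cos (j:ℝ); have hss := ii_sin (j:ℝ)
  have h1 : IntervalIntegrable (fun x => c j * c k * (Real.cos (j*x) * Real.cos (k*x))) MeasureTheory.volume 0 (2*π) := by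
    apply Continuous.intervalIntegrable; fun_prop
  have h2 : IntervalIntegrable (fun x => d j * d k * (Real.sin (j*x) * Real.sin (k*x))) MeasureTheory.volume 0 (2*π) := by
    apply Continuous.intervalIntegrable; fun_prop
  have h3 : IntervalIntegrable (fun x => c j * d k * (Real.sin (k*x) * Real.cos (j*x))) MeasureTheory.volume 0 (2*π) := by
    apply Continuous.intervalIntegrable; fun_prop
  have h4 : IntervalIntegrable (fun x => d j * c k * (Real.sin (j*x) * Real.cos (k*x))) MeasureTheory.volume 0 (2*π) := by
    apply Continuous.intervalIntegrable; fun_prop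
  rw [intervalIntegral.integral_congr
    (g := fun x => c j * c k * (Real.cos (j*x) * Real.cos (k*x))
      + (d j * d k * (Real.sin (j*x) * Real.sin (k*x))
      + (c j * d k * (Real.sin (k*x) * Real.cos (j*x))
      + d j * c k * (Real.sin (j*x) * Real.cos (k*x))))) (fun x _ => by ring)]
  rw [intervalIntegral.integral_add h1 (h2.add (h3.add h4)),
    intervalIntegral.integral_add h2 (h3.add h4),
    intervalIntegral.integral_add h3 h4,
    intervalIntegral.integral_const_mul, intervalIntegral.integral_const_mul,
    intervalIntegral.integral_const_mul, intervalIntegral.integral_const_mul,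
    orth_cc j k hj hk, orth_ss j k hj hk, orth_sc k j, orth_sc j k]
  rcases eq_or_ne j k with rfl | hne
  · simp; ring
  · simp [hne]

lemma parseval (n : ℕ) (c d : ℕ → ℝ) :
    ∫ x in (0:ℝ)..(2*π),
      (∑ k ∈ Finset.Icc 1 n, (c k * Real.cos (k*x) + d k * Real.sin (k*x)))^2
      = π * ∑ k ∈ Finset.Icc 1 n, ((c k)^2 + (d k)^2) := by
  have hterm : ∀ j k : ℕ, IntervalIntegrable
      (fun x => (c j * Real.cos (j*x) + d j * Real.sin (j*x))
        * (c k * Real.cos (k*x) + d k * Real.sin (k*x))) MeasureTheory.volume 0 (2*π) := by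
    intro j k; apply Continuous.intervalIntegrable; fun_prop
  have swap2 : ∀ j : ℕ, (∫ x in (0:ℝ)..(2*π), ∑ k ∈ Finset.Icc 1 n,
      (c j * Real.cos (j*x) + d j * Real.sin (j*x)) * (c k * Real.cos (k*x) + d k * Real.sin (k*x)))
      = ∑ k ∈ Finset.Icc 1 n, ∫ x in (0:ℝ)..(2*π),
      (c j * Real.cos (j*x) + d j * Real.sin (j*x)) * (c k * Real.cos (k*x) + d k * Real.sin (k*x)) := by
    intro j
    exact intervalIntegral.integral_finset_sum (fun k _ => hterm j k)
  have swap1 : (∫ x in (0:ℝ)..(2*π), ∑ j ∈ Finset.Icc 1 n, ∑ k ∈ Finset.Icc 1 n,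
      (c j * Real.cos (j*x) + d j * Real.sin (j*x)) * (c k * Real.cos (k*x) + d k * Real.sin (k*x)))
      = ∑ j ∈ Finset.Icc 1 n, ∫ x in (0:ℝ)..(2*π), ∑ k ∈ Finset.Icc 1 n,
      (c j * Real.cos (j*x) + d j * Real.sin (j*x)) * (c k * Real.cos (k*x) + d k * Real.sin (k*x)) := by
    exact intervalIntegral.integral_finset_sum (fun j _ =>
      (continuous_finset_sum _ (fun k _ => by fun_prop)).intervalIntegrable _ _)
  rw [intervalIntegral.integral_congr
    (g := fun x => ∑ j ∈ Finset.Icc 1 n, ∑ k ∈ Finset.Icc 1 n,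
      (c j * Real.cos (j*x) + d j * Real.sin (j*x)) * (c k * Real.cos (k*x) + d k * Real.sin (k*x)))
    (fun x _ => by rw [sq, Finset.sum_mul_sum])]
  rw [swap1]
  rw [Finset.sum_congr rfl (fun j hj => swap2 j)]
  have : ∀ j ∈ Finset.Icc 1 n, (∑ k ∈ Finset.Icc 1 n, ∫ x in (0:ℝ)..(2*π),
      (c j * Real.cos (j*x) + d j * Real.sin (j*x)) * (c k * Real.cos (k*x) + d k * Real.sin (k*x)))
      = π * ((c j)^2 + (d j)^2) := by
    intro j hj
    have hj1 : 1 ≤ j := (Finset.mem_Icc.1 hj).1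
    rw [Finset.sum_congr rfl (fun k hk => key_term c d j k hj1 (Finset.mem_Icc.1 hk).1)]
    rw [Finset.sum_ite_eq (Finset.Icc 1 n) j (fun _ => π * ((c j)^2 + (d j)^2)), if_pos hj]
  rw [Finset.sum_congr rfl this, Finset.mul_sum]

lemma hasDeriv_trig (a b : ℕ → ℝ) (n : ℕ) (x t : ℝ) :
    HasDerivAt (fun u => trigPoly a b n (x + u/n))
      ((Real.sqrt n)⁻¹ * ∑ k ∈ Finset.Icc 1 n,
        ((k:ℝ)/n) * (b k * Real.cos (k*(x + t/n)) - a k * Real.sin (k*(x + t/n)))) t := by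
  have h : ∀ k ∈ Finset.Icc 1 n, HasDerivAt
      (fun u => a k * Real.cos ((k:ℝ)*(x + u/n)) + b k * Real.sin ((k:ℝ)*(x + u/n)))
      (((k:ℝ)/n) * (b k * Real.cos ((k:ℝ)*(x + t/n)) - a k * Real.sin ((k:ℝ)*(x + t/n)))) t := by
    intro k _
    have hi : HasDerivAt (fun u : ℝ => (k:ℝ)*(x + u/n)) ((k:ℝ)*(1/n)) t := by
      simpa using (((hasDerivAt_id t).div_const (n:ℝ)).const_add x).const_mul (k:ℝ)
    have hc := (Real.hasDerivAt_cos ((k:ℝ)*(x + t/n))).comp t hi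
    have hs := (Real.hasDerivAt_sin ((k:ℝ)*(x + t/n))).comp t hi
    have h2 : ((k:ℝ)/n) * (b k * Real.cos ((k:ℝ)*(x + t/n)) - a k * Real.sin ((k:ℝ)*(x + t/n)))
        = a k * (-Real.sin ((k:ℝ)*(x + t/n)) * ((k:ℝ)*(1/n)))
          + b k * (Real.cos ((k:ℝ)*(x + t/n)) * ((k:ℝ)*(1/n))) := by ring
    rw [h2]
    exact (hc.const_mul (a k)).add (hs.const_mul (b k))
  exact (HasDerivAt.fun_sum h).const_mul (Real.sqrt n)⁻¹

lemma deriv_trig (a b : ℕ → ℝ) (n : ℕ) (x t : ℝ) :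
    deriv (fun u => trigPoly a b n (x + u/n)) t
      = (Real.sqrt n)⁻¹ * ∑ k ∈ Finset.Icc 1 n,
        ((k:ℝ)/n) * (b k * Real.cos (k*(x + t/n)) - a k * Real.sin (k*(x + t/n))) :=
  (hasDeriv_trig a b n x t).deriv

lemma core (n : ℕ) (hn : 1 ≤ n) (aa bb : ℕ → ℝ) (s t M : ℝ) (hM0 : 0 ≤ M)
    (hM : ∑ k ∈ Finset.Icc 1 n, ((aa k)^2 + (bb k)^2) ≤ M * n)
    (C D : ℕ → ℝ)
    (hCD : ∀ k ∈ Finset.Icc 1 n, (C k)^2 + (D k)^2 ≤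
      (n:ℝ)⁻¹ * ((aa k)^2 + (bb k)^2) * (2 - 2 * Real.cos ((k:ℝ)*(t/n) - (k:ℝ)*(s/n)))) :
    (1/(2*π)) * (π * ∑ k ∈ Finset.Icc 1 n, ((C k)^2 + (D k)^2)) ≤ M * (t-s)^2 := by
  have hn' : (0:ℝ) < n := by exact_mod_cast hn
  have step : ∀ k ∈ Finset.Icc 1 n, (C k)^2 + (D k)^2
      ≤ (n:ℝ)⁻¹ * ((aa k)^2 + (bb k)^2) * (t-s)^2 := by
    intro k hk
    have hkn : (k:ℝ) ≤ n := by exact_mod_cast (Finset.mem_Icc.1 hk).2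
    set θ : ℝ := (k:ℝ)*(t/n) - (k:ℝ)*(s/n) with hθdef
    clear_value θ
    have h1 : 2 - 2 * Real.cos θ ≤ θ^2 := by
      have := Real.one_sub_sq_div_two_le_cos (x := θ)
      linarith
    have h2 : θ^2 ≤ (t-s)^2 := by
      have hθ : θ = ((k:ℝ)/n) * (t-s) := by rw [hθdef]; ring
      have hfrac : ((k:ℝ)/n)^2 ≤ 1 := by
        apply pow_le_one₀ (by positivity)
        exact div_le_one_of_le₀ hkn (le_of_lt hn')
      calc θ^2 = ((k:ℝ)/n)^2 * (t-s)^2 := by rw [hθ]; ring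
      _ ≤ 1 * (t-s)^2 := mul_le_mul_of_nonneg_right hfrac (sq_nonneg _)
      _ = (t-s)^2 := one_mul _
    have hpos : 0 ≤ (n:ℝ)⁻¹ * ((aa k)^2 + (bb k)^2) := by positivity
    calc (C k)^2 + (D k)^2 ≤ (n:ℝ)⁻¹ * ((aa k)^2 + (bb k)^2) * (2 - 2 * Real.cos θ) := by rw [hθdef]; exact hCD k hk
    _ ≤ (n:ℝ)⁻¹ * ((aa k)^2 + (bb k)^2) * (t-s)^2 :=
        mul_le_mul_of_nonneg_left (h1.trans h2) hpos
  have hsum : ∑ k ∈ Finset.Icc 1 n, ((C k)^2 + (D k)^2) ≤ M * (t-s)^2 := by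
    calc ∑ k ∈ Finset.Icc 1 n, ((C k)^2 + (D k)^2)
        ≤ ∑ k ∈ Finset.Icc 1 n, (n:ℝ)⁻¹ * ((aa k)^2 + (bb k)^2) * (t-s)^2 :=
          Finset.sum_le_sum step
    _ = (n:ℝ)⁻¹ * (t-s)^2 * ∑ k ∈ Finset.Icc 1 n, ((aa k)^2 + (bb k)^2) := by
          rw [Finset.mul_sum]; exact Finset.sum_congr rfl fun k _ => by ring
    _ ≤ (n:ℝ)⁻¹ * (t-s)^2 * (M * n) := by
          apply mul_le_mul_of_nonneg_left hM (by positivity)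
    _ = M * (t-s)^2 := by field_simp
  have hS0 : 0 ≤ ∑ k ∈ Finset.Icc 1 n, ((C k)^2 + (D k)^2) :=
    Finset.sum_nonneg fun k _ => by positivity
  have hπ : 0 < π := Real.pi_pos
  have : (1/(2*π)) * (π * ∑ k ∈ Finset.Icc 1 n, ((C k)^2 + (D k)^2))
      = (∑ k ∈ Finset.Icc 1 n, ((C k)^2 + (D k)^2)) / 2 := by
    field_simp
  rw [this]
  nlinarith [sq_nonneg (t-s)]

lemma core2 (n : ℕ) (hn : 1 ≤ n) (aa bb : ℕ → ℝ) (s t M : ℝ) (hM0 : 0 ≤ M)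
    (hM : ∑ k ∈ Finset.Icc 1 n, ((aa k)^2 + (bb k)^2) ≤ M * n)
    (C D : ℕ → ℝ)
    (hCD : ∀ k ∈ Finset.Icc 1 n, (C k)^2 + (D k)^2 ≤
      (n:ℝ)⁻¹ * ((aa k)^2 + (bb k)^2) * (2 - 2 * Real.cos ((k:ℝ)*(t/n) - (k:ℝ)*(s/n))))
    (F : ℝ → ℝ)
    (hpt : ∀ x : ℝ, F x = ∑ k ∈ Finset.Icc 1 n, (C k * Real.cos ((k:ℝ)*x) + D k * Real.sin ((k:ℝ)*x))) :
    (1/(2*π)) * ∫ x in (0:ℝ)..(2*π), (F x)^2 ≤ M * (t-s)^2 := by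
  have : (∫ x in (0:ℝ)..(2*π), (F x)^2)
      = ∫ x in (0:ℝ)..(2*π), (∑ k ∈ Finset.Icc 1 n,
        (C k * Real.cos ((k:ℝ)*x) + D k * Real.sin ((k:ℝ)*x)))^2 :=
    intervalIntegral.integral_congr (fun x _ => by rw [hpt x])
  rw [this, parseval n C D]
  exact core n hn aa bb s t M hM0 hM C D hCD

lemma sqrt_inv_sq (n : ℕ) : ((Real.sqrt n)⁻¹)^2 = (n:ℝ)⁻¹ := by
  rw [← Real.sqrt_inv, Real.sq_sqrt (by positivity)]

lemma PQ_identity (T S : ℝ) :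
    (Real.cos T - Real.cos S)^2 + (Real.sin T - Real.sin S)^2 = 2 - 2 * Real.cos (T - S) := by
  rw [Real.cos_sub]
  linear_combination Real.sin_sq_add_cos_sq T + Real.sin_sq_add_cos_sq S

lemma bound_fun (aa bb : ℕ → ℝ) (n : ℕ) (hn : 1 ≤ n) (s t M : ℝ) (hM0 : 0 ≤ M)
    (hM : ∑ k ∈ Finset.Icc 1 n, ((aa k)^2 + (bb k)^2) ≤ M * n) :
    (1/(2*π)) * ∫ x in (0:ℝ)..(2*π),
      (trigPoly aa bb n (x + t/n) - trigPoly aa bb n (x + s/n))^2 ≤ M * (t-s)^2 := by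
  apply core2 n hn aa bb s t M hM0 hM
    (fun k => (Real.sqrt n)⁻¹ * (aa k * (Real.cos ((k:ℝ)*(t/n)) - Real.cos ((k:ℝ)*(s/n)))
      + bb k * (Real.sin ((k:ℝ)*(t/n)) - Real.sin ((k:ℝ)*(s/n)))))
    (fun k => (Real.sqrt n)⁻¹ * (bb k * (Real.cos ((k:ℝ)*(t/n)) - Real.cos ((k:ℝ)*(s/n)))
      - aa k * (Real.sin ((k:ℝ)*(t/n)) - Real.sin ((k:ℝ)*(s/n)))))
  · intro k _
    have hw := sqrt_inv_sq n
    have hPQ := PQ_identity ((k:ℝ)*(t/n)) ((k:ℝ)*(s/n))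
    apply le_of_eq
    calc ((Real.sqrt n)⁻¹ * (aa k * (Real.cos ((k:ℝ)*(t/n)) - Real.cos ((k:ℝ)*(s/n)))
          + bb k * (Real.sin ((k:ℝ)*(t/n)) - Real.sin ((k:ℝ)*(s/n)))))^2
        + ((Real.sqrt n)⁻¹ * (bb k * (Real.cos ((k:ℝ)*(t/n)) - Real.cos ((k:ℝ)*(s/n)))
          - aa k * (Real.sin ((k:ℝ)*(t/n)) - Real.sin ((k:ℝ)*(s/n)))))^2
        = (n:ℝ)⁻¹ * ((aa k)^2 + (bb k)^2)
          * ((Real.cos ((k:ℝ)*(t/n)) - Real.cos ((k:ℝ)*(s/n)))^2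
            + (Real.sin ((k:ℝ)*(t/n)) - Real.sin ((k:ℝ)*(s/n)))^2) := by
          rw [← hw]; ring
    _ = (n:ℝ)⁻¹ * ((aa k)^2 + (bb k)^2) * (2 - 2 * Real.cos ((k:ℝ)*(t/n) - (k:ℝ)*(s/n))) := by
          rw [hPQ]
  · intro x
    simp only [trigPoly, ← mul_sub, ← Finset.sum_sub_distrib, Finset.mul_sum]
    apply Finset.sum_congr rfl
    intro k _
    rw [show (k:ℝ)*(x + t/n) = (k:ℝ)*x + (k:ℝ)*(t/n) by ring,
      show (k:ℝ)*(x + s/n) = (k:ℝ)*x + (k:ℝ)*(s/n) by ring,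
      Real.cos_add, Real.sin_add, Real.cos_add, Real.sin_add]
    ring

lemma bound_deriv (aa bb : ℕ → ℝ) (n : ℕ) (hn : 1 ≤ n) (s t M : ℝ) (hM0 : 0 ≤ M)
    (hM : ∑ k ∈ Finset.Icc 1 n, ((aa k)^2 + (bb k)^2) ≤ M * n) :
    (1/(2*π)) * ∫ x in (0:ℝ)..(2*π),
      (deriv (fun u => trigPoly aa bb n (x + u/n)) t
        - deriv (fun u => trigPoly aa bb n (x + u/n)) s)^2 ≤ M * (t-s)^2 := by
  apply core2 n hn aa bb s t M hM0 hM
    (fun k => (Real.sqrt n)⁻¹ * ((k:ℝ)/n) * (bb k * (Real.cos ((k:ℝ)*(t/n)) - Real.cos ((k:ℝ)*(s/n)))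
      - aa k * (Real.sin ((k:ℝ)*(t/n)) - Real.sin ((k:ℝ)*(s/n)))))
    (fun k => -((Real.sqrt n)⁻¹ * ((k:ℝ)/n) * (bb k * (Real.sin ((k:ℝ)*(t/n)) - Real.sin ((k:ℝ)*(s/n)))
      + aa k * (Real.cos ((k:ℝ)*(t/n)) - Real.cos ((k:ℝ)*(s/n))))))
  · intro k hk
    have hn' : (0:ℝ) < n := by exact_mod_cast hn
    have hkn : (k:ℝ) ≤ n := by exact_mod_cast (Finset.mem_Icc.1 hk).2
    have hw := sqrt_inv_sq n
    have hPQ := PQ_identity ((k:ℝ)*(t/n)) ((k:ℝ)*(s/n))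
    have hfrac : ((k:ℝ)/n)^2 ≤ 1 :=
      pow_le_one₀ (by positivity) (div_le_one_of_le₀ hkn (le_of_lt hn'))
    have heq : ((Real.sqrt n)⁻¹ * ((k:ℝ)/n) * (bb k * (Real.cos ((k:ℝ)*(t/n)) - Real.cos ((k:ℝ)*(s/n)))
          - aa k * (Real.sin ((k:ℝ)*(t/n)) - Real.sin ((k:ℝ)*(s/n)))))^2
        + (-((Real.sqrt n)⁻¹ * ((k:ℝ)/n) * (bb k * (Real.sin ((k:ℝ)*(t/n)) - Real.sin ((k:ℝ)*(s/n)))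
          + aa k * (Real.cos ((k:ℝ)*(t/n)) - Real.cos ((k:ℝ)*(s/n))))))^2
        = ((k:ℝ)/n)^2 * ((n:ℝ)⁻¹ * ((aa k)^2 + (bb k)^2)
          * ((Real.cos ((k:ℝ)*(t/n)) - Real.cos ((k:ℝ)*(s/n)))^2
            + (Real.sin ((k:ℝ)*(t/n)) - Real.sin ((k:ℝ)*(s/n)))^2)) := by
      rw [← hw]; ring
    rw [heq, hPQ]
    have hcos : 0 ≤ 2 - 2 * Real.cos ((k:ℝ)*(t/n) - (k:ℝ)*(s/n)) := by
      have := Real.cos_le_one ((k:ℝ)*(t/n) - (k:ℝ)*(s/n)); linarith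
    have hrest : 0 ≤ (n:ℝ)⁻¹ * ((aa k)^2 + (bb k)^2)
        * (2 - 2 * Real.cos ((k:ℝ)*(t/n) - (k:ℝ)*(s/n))) := by positivity
    calc ((k:ℝ)/n)^2 * ((n:ℝ)⁻¹ * ((aa k)^2 + (bb k)^2)
          * (2 - 2 * Real.cos ((k:ℝ)*(t/n) - (k:ℝ)*(s/n))))
        ≤ 1 * ((n:ℝ)⁻¹ * ((aa k)^2 + (bb k)^2)
          * (2 - 2 * Real.cos ((k:ℝ)*(t/n) - (k:ℝ)*(s/n)))) :=
          mul_le_mul_of_nonneg_right hfrac hrest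
    _ = (n:ℝ)⁻¹ * ((aa k)^2 + (bb k)^2) * (2 - 2 * Real.cos ((k:ℝ)*(t/n) - (k:ℝ)*(s/n))) :=
          one_mul _
  · intro x
    rw [deriv_trig aa bb n x t, deriv_trig aa bb n x s,
      ← mul_sub, ← Finset.sum_sub_distrib, Finset.mul_sum]
    apply Finset.sum_congr rfl
    intro k _
    rw [show (k:ℝ)*(x + t/n) = (k:ℝ)*x + (k:ℝ)*(t/n) by ring,
      show (k:ℝ)*(x + s/n) = (k:ℝ)*x + (k:ℝ)*(s/n) by ring,
      Real.cos_add, Real.sin_add, Real.cos_add, Real.sin_add]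
    ring

/-- **Kolmogorov–Lamperti estimates for tightness.** ℙ-a.s. there is `C = C(ω)` such that
for all `n ≥ 1` and `s, t ∈ [0,2π]`, `E_X[(g_n(t) − g_n(s))²] ≤ C (t−s)²` and
`E_X[(g_n'(t) − g_n'(s))²] ≤ C (t−s)²`, where `g_n(t) = f_n(X + t/n)`. -/
theorem lamperti_estimates
    {Ω : Type*} [MeasureSpace Ω] [IsProbabilityMeasure (ℙ : Measure Ω)]
    (a b : ℕ → Ω → ℝ)
    (hmeas : ∀ i : ℕ ⊕ ℕ, Measurable (Sum.elim a b i))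
    (hindep : iIndepFun
      (Sum.elim a b) ℙ)
    (hident : ∀ i : ℕ ⊕ ℕ, IdentDistrib (Sum.elim a b i) (a 1) ℙ ℙ)
    (hcent : ∫ ω, a 1 ω ∂ℙ = 0)
    (hvar : ∫ ω, (a 1 ω) ^ 2 ∂ℙ = 1) :
    ∀ᵐ ω ∂(ℙ : Measure Ω), ∃ C : ℝ, ∀ n : ℕ, 1 ≤ n →
      ∀ s ∈ Set.Icc (0:ℝ) (2 * π), ∀ t ∈ Set.Icc (0:ℝ) (2 * π),
        ((1 / (2 * π)) * ∫ x in (0:ℝ)..(2 * π),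
            (trigPoly (fun k => a k ω) (fun k => b k ω) n (x + t / n)
              - trigPoly (fun k => a k ω) (fun k => b k ω) n (x + s / n)) ^ 2)
          ≤ C * (t - s) ^ 2 ∧
        ((1 / (2 * π)) * ∫ x in (0:ℝ)..(2 * π),
            (deriv (fun u => trigPoly (fun k => a k ω) (fun k => b k ω) n (x + u / n)) t
              - deriv (fun u => trigPoly (fun k => a k ω) (fun k => b k ω) n (x + u / n)) s) ^ 2)
          ≤ C * (t - s) ^ 2 := by
  have hsq : Measurable fun x : ℝ => x ^ 2 := measurable_id.pow_const 2
  have hint1 : Integrable (fun ω => (a 1 ω) ^ 2) ℙ := by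
    by_contra h
    rw [integral_undef h] at hvar
    exact one_ne_zero hvar.symm
  -- the squared a-sequence
  have hidA : ∀ i : ℕ, IdentDistrib (fun ω => (a i ω) ^ 2) (fun ω => (a 0 ω) ^ 2) ℙ ℙ :=
    fun i => ((hident (Sum.inl i)).comp hsq).trans ((hident (Sum.inl 0)).comp hsq).symm
  have hintA : Integrable (fun ω => (a 0 ω) ^ 2) ℙ :=
    (((hident (Sum.inl 0)).comp hsq).integrable_iff).2 hint1
  have hindA : Pairwise (Function.onFun (IndepFun · · ℙ) fun i (ω : Ω) => (a i ω) ^ 2) := by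
    intro i j hij
    exact (hindep.indepFun (show (Sum.inl i : ℕ ⊕ ℕ) ≠ Sum.inl j by simp [hij])).comp hsq hsq
  have hA := strong_law_ae_real (fun i ω => (a i ω) ^ 2) hintA hindA hidA
  -- the squared b-sequence
  have hidB : ∀ i : ℕ, IdentDistrib (fun ω => (b i ω) ^ 2) (fun ω => (b 0 ω) ^ 2) ℙ ℙ :=
    fun i => ((hident (Sum.inr i)).comp hsq).trans ((hident (Sum.inr 0)).comp hsq).symm
  have hintB : Integrable (fun ω => (b 0 ω) ^ 2) ℙ :=
    (((hident (Sum.inr 0)).comp hsq).integrable_iff).2 hint1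
  have hindB : Pairwise (Function.onFun (IndepFun · · ℙ) fun i (ω : Ω) => (b i ω) ^ 2) := by
    intro i j hij
    exact (hindep.indepFun (show (Sum.inr i : ℕ ⊕ ℕ) ≠ Sum.inr j by simp [hij])).comp hsq hsq
  have hB := strong_law_ae_real (fun i ω => (b i ω) ^ 2) hintB hindB hidB
  filter_upwards [hA, hB] with ω h1 h2
  obtain ⟨M1, hM1'⟩ := h1.bddAbove_range
  obtain ⟨M2, hM2'⟩ := h2.bddAbove_range
  have hM1 : ∀ n : ℕ, (∑ i ∈ Finset.range n, (a i ω) ^ 2) / n ≤ M1 :=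
    fun n => hM1' ⟨n, rfl⟩
  have hM2 : ∀ n : ℕ, (∑ i ∈ Finset.range n, (b i ω) ^ 2) / n ≤ M2 :=
    fun n => hM2' ⟨n, rfl⟩
  have hM10 : 0 ≤ M1 := le_trans (by simp) (hM1 0)
  have hM20 : 0 ≤ M2 := le_trans (by simp) (hM2 0)
  refine ⟨2 * (M1 + M2), fun n hn s hs t ht => ?_⟩
  have hn' : (0:ℝ) < n := by exact_mod_cast hn
  have hsubset : Finset.Icc 1 n ⊆ Finset.range (n+1) := by
    intro k hk
    simp only [Finset.mem_range, Finset.mem_Icc] at *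
    omega
  have hsumA : ∑ k ∈ Finset.Icc 1 n, (a k ω) ^ 2 ≤ M1 * (n + 1) := by
    have h1' : ∑ k ∈ Finset.Icc 1 n, (a k ω) ^ 2 ≤ ∑ k ∈ Finset.range (n+1), (a k ω) ^ 2 :=
      Finset.sum_le_sum_of_subset_of_nonneg hsubset (fun k _ _ => sq_nonneg _)
    have h2' := hM1 (n+1)
    have hpos : (0:ℝ) < (n+1 : ℕ) := by positivity
    rw [div_le_iff₀ hpos] at h2'
    calc ∑ k ∈ Finset.Icc 1 n, (a k ω) ^ 2 ≤ _ := h1'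
    _ ≤ M1 * ((n:ℝ)+1) := by push_cast at h2' ⊢; linarith
  have hsumB : ∑ k ∈ Finset.Icc 1 n, (b k ω) ^ 2 ≤ M2 * (n + 1) := by
    have h1' : ∑ k ∈ Finset.Icc 1 n, (b k ω) ^ 2 ≤ ∑ k ∈ Finset.range (n+1), (b k ω) ^ 2 :=
      Finset.sum_le_sum_of_subset_of_nonneg hsubset (fun k _ _ => sq_nonneg _)
    have h2' := hM2 (n+1)
    have hpos : (0:ℝ) < (n+1 : ℕ) := by positivity
    rw [div_le_iff₀ hpos] at h2'
    calc ∑ k ∈ Finset.Icc 1 n, (b k ω) ^ 2 ≤ _ := h1'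
    _ ≤ M2 * ((n:ℝ)+1) := by push_cast at h2' ⊢; linarith
  have hM : ∑ k ∈ Finset.Icc 1 n, (((fun k => a k ω) k)^2 + ((fun k => b k ω) k)^2)
      ≤ (2 * (M1 + M2)) * n := by
    rw [Finset.sum_add_distrib]
    have hn1 : (n:ℝ) + 1 ≤ 2 * n := by
      have : (1:ℝ) ≤ n := by exact_mod_cast hn
      linarith
    calc (∑ k ∈ Finset.Icc 1 n, (a k ω) ^ 2) + ∑ k ∈ Finset.Icc 1 n, (b k ω) ^ 2
        ≤ M1 * (n+1) + M2 * (n+1) := add_le_add hsumA hsumB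
    _ = (M1 + M2) * (n+1) := by ring
    _ ≤ (M1 + M2) * (2*n) := by
        apply mul_le_mul_of_nonneg_left _ (by linarith)
        push_cast; linarith
    _ = (2 * (M1 + M2)) * n := by ring
  have hM0 : (0:ℝ) ≤ 2 * (M1 + M2) := by linarith
  exact ⟨bound_fun (fun k => a k ω) (fun k => b k ω) n hn s t _ hM0 hM,
    bound_deriv (fun k => a k ω) (fun k => b k ω) n hn s t _ hM0 hM⟩
end

section
/- (Kolmogorov distance controlled by the C³ distance to the Gaussian.) There exists a universal constant C > 0 such that for every Borel probability measure μ on ℝ, sup_{x∈ℝ} | μ((−∞,x]) − γ((−∞,x]) | ≤ C · d_{C³}(μ,γ)^{1/4}, where γ is the standard Gaussian measure and d_{C³}(μ,γ) := sup over φ : ℝ → ℝ of class C³ with ‖φ^{(k)}‖_∞ ≤ 1 for k = 0,1,2,3 of (∫_ℝ φ dμ − ∫_ℝ φ dγ). -/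
/-!
Let `s` be Mathlib's `smoothTransition` (`0` on `(-∞, 0]`, `1` on `[1, ∞)`). Its derivatives are
continuous and supported in `[0, 1]`, hence bounded by some `K`. For `0 < ε ≤ 1` the step
`t ↦ s ((x + ε - t) / ε)` lies between the indicators of `(-∞, x]` and `(-∞, x + ε]`, and its
first three derivatives are bounded by `K / ε³`, so its integrals against `μ` and `γ` differ by at
most `K d / ε³`, where `d = dC3 μ`. The Gaussian density is at most `1`, so shifting the cut-off by
`ε` moves `γ` by at most `ε`. Hence `|μ(-∞, x] - γ(-∞, x]| ≤ ε + K d / ε³`, and `ε = d ^ (1/4)`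
gives the bound `(K + 1) d ^ (1/4)`; for `d ≥ 1` the trivial bound `1` suffices.
-/

open MeasureTheory ProbabilityTheory

/-- The `C³` distance between a probability measure `μ` on `ℝ` and the standard Gaussian
measure `γ`: the supremum over `C³` functions `φ` whose derivatives of order `0,…,3` are
bounded by `1` of `∫ φ dμ − ∫ φ dγ`. -/
noncomputable def dC3 (μ : Measure ℝ) : ℝ :=
  sSup { r : ℝ | ∃ φ : ℝ → ℝ, ContDiff ℝ 3 φ ∧
      (∀ k ≤ 3, ∀ x, |iteratedDeriv k φ x| ≤ 1) ∧
      r = (∫ x, φ x ∂μ) - ∫ y, φ y ∂(gaussianReal 0 1) }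

open Set Filter Topology Real

section dC3

variable (μ : Measure ℝ) [IsFiniteMeasure μ]

lemma bddAbove_dC3 : BddAbove { r : ℝ | ∃ φ : ℝ → ℝ, ContDiff ℝ 3 φ ∧
      (∀ k ≤ 3, ∀ x, |iteratedDeriv k φ x| ≤ 1) ∧
      r = (∫ x, φ x ∂μ) - ∫ y, φ y ∂(gaussianReal 0 1) } := by
  refine ⟨μ.real univ + 1, ?_⟩
  rintro _ ⟨φ, -, hφ, rfl⟩
  have hφ0 : ∀ x, ‖φ x‖ ≤ 1 := fun x => by simpa using hφ 0 (by norm_num) x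
  have hμ := norm_integral_le_of_norm_le_const (μ := μ) (Eventually.of_forall hφ0)
  have hγ := norm_integral_le_of_norm_le_const (μ := gaussianReal 0 1) (Eventually.of_forall hφ0)
  simp only [Real.norm_eq_abs, probReal_univ, mul_one, one_mul] at hμ hγ
  linarith [le_abs_self (∫ x, φ x ∂μ), neg_abs_le (∫ x, φ x ∂gaussianReal 0 1)]

variable {μ}

lemma integral_sub_integral_le_dC3 {φ : ℝ → ℝ} (hφ : ContDiff ℝ 3 φ)
    (hbound : ∀ k ≤ 3, ∀ x, |iteratedDeriv k φ x| ≤ 1) :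
    (∫ x, φ x ∂μ) - ∫ x, φ x ∂(gaussianReal 0 1) ≤ dC3 μ :=
  le_csSup (bddAbove_dC3 μ) ⟨φ, hφ, hbound, rfl⟩

variable (μ) in
lemma dC3_nonneg : 0 ≤ dC3 μ := by
  simpa using integral_sub_integral_le_dC3 (μ := μ) (contDiff_const (c := (0 : ℝ)))
    (fun k _ x => by simp)

lemma abs_integral_sub_integral_le_mul_dC3 {φ : ℝ → ℝ} (hφ : ContDiff ℝ 3 φ) {M : ℝ}
    (hM : 0 < M) (hbound : ∀ k ≤ 3, ∀ x, |iteratedDeriv k φ x| ≤ M) :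
    |(∫ x, φ x ∂μ) - ∫ x, φ x ∂(gaussianReal 0 1)| ≤ M * dC3 μ := by
  set Δ := (∫ x, φ x ∂μ) - ∫ x, φ x ∂(gaussianReal 0 1)
  have hsign : ∀ s : ℝ, |s| = 1 → s * Δ ≤ M * dC3 μ := by
    intro s hs
    rw [← inv_mul_le_iff₀ hM, ← mul_assoc]
    have hbound' : ∀ k ≤ 3, ∀ x, |iteratedDeriv k (fun x => M⁻¹ * s * φ x) x| ≤ 1 := by
      intro k hk x
      rw [iteratedDeriv_const_mul_field, abs_mul, abs_mul, hs, mul_one,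
        abs_of_pos (inv_pos.2 hM), inv_mul_le_one₀ hM]
      exact hbound k hk x
    have := integral_sub_integral_le_dC3 (μ := μ) (contDiff_const.mul hφ) hbound'
    rwa [integral_const_mul, integral_const_mul, ← mul_sub] at this
  rw [abs_le]
  constructor <;> linarith [hsign 1 (by simp), hsign (-1) (by simp)]

end dC3

lemma iteratedDeriv_comp_mul_add {𝕜 : Type*} [NontriviallyNormedField 𝕜] {n : ℕ} {g : 𝕜 → 𝕜}
    (hg : ContDiff 𝕜 n g) (c b : 𝕜) :
    iteratedDeriv n (fun x => g (c * x + b)) = fun x => c ^ n * iteratedDeriv n g (c * x + b) := by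
  have := iteratedDeriv_comp_const_mul (hg.comp (contDiff_id.add (contDiff_const (c := b)))) c
  simpa only [Function.comp_def, id, iteratedDeriv_comp_add_const] using this

lemma abs_iteratedDeriv_comp_mul_add_le {n : ℕ} {g : ℝ → ℝ} (hg : ContDiff ℝ n g) {K : ℝ}
    (hK : ∀ k ≤ n, ∀ t, |iteratedDeriv k g t| ≤ K) {c : ℝ} (hc : 1 ≤ |c|) (b : ℝ) :
    ∀ k ≤ n, ∀ t, |iteratedDeriv k (fun x => g (c * x + b)) t| ≤ |c| ^ n * K := by
  intro k hk t
  rw [iteratedDeriv_comp_mul_add (hg.of_le (by exact_mod_cast hk)), abs_mul, abs_pow]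
  exact mul_le_mul (pow_le_pow_right₀ hc hk) (hK k hk _) (abs_nonneg _) (by positivity)

lemma iteratedDeriv_smoothTransition_eq_zero {k : ℕ} (hk : k ≠ 0) {t : ℝ} (ht : t ∉ Icc 0 1) :
    iteratedDeriv k smoothTransition t = 0 := by
  obtain ⟨c, hc⟩ : ∃ c : ℝ, smoothTransition =ᶠ[𝓝 t] fun _ => c := by
    simp only [mem_Icc, not_and_or, not_le] at ht
    rcases ht with ht | ht
    · exact ⟨0, eventually_of_mem (Iio_mem_nhds ht) fun x hx =>
        smoothTransition.zero_of_nonpos hx.le⟩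
    · exact ⟨1, eventually_of_mem (Ioi_mem_nhds ht) fun x hx =>
        smoothTransition.one_of_one_le hx.le⟩
  rw [hc.iteratedDeriv_eq k, iteratedDeriv_const, if_neg hk]

lemma exists_bound_iteratedDeriv_smoothTransition (n : ℕ) :
    ∃ K, 0 < K ∧ ∀ k ≤ n, ∀ t, |iteratedDeriv k smoothTransition t| ≤ K := by
  have hbdd : ∀ k, ∃ C, ∀ t, ‖iteratedDeriv k smoothTransition t‖ ≤ C := by
    intro k
    rcases eq_or_ne k 0 with rfl | hk
    · exact ⟨1, fun t => by
        simpa [abs_of_nonneg (smoothTransition.nonneg t)] using smoothTransition.le_one t⟩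
    · exact (smoothTransition.contDiff.continuous_iteratedDeriv' k).bounded_above_of_compact_support
        (HasCompactSupport.intro isCompact_Icc fun _ => iteratedDeriv_smoothTransition_eq_zero hk)
  choose C hC using hbdd
  refine ⟨1 + ∑ k ∈ Finset.range (n + 1), |C k|, by positivity, fun k hk t => ?_⟩
  have := Finset.single_le_sum (fun j _ => abs_nonneg (C j)) (Finset.mem_range_succ_iff.2 hk)
  rw [← Real.norm_eq_abs]
  linarith [hC k t, le_abs_self (C k)]

section Sandwich

variable (ν : Measure ℝ) [IsFiniteMeasure ν]

lemma integrable_smoothTransition_comp {h : ℝ → ℝ} (hh : Measurable h) :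
    Integrable (fun t => smoothTransition (h t)) ν :=
  (integrable_const (1 : ℝ)).mono'
    (smoothTransition.continuous.measurable.comp hh).aestronglyMeasurable
    (Eventually.of_forall fun t => by
      simpa [abs_of_nonneg (smoothTransition.nonneg _)] using smoothTransition.le_one _)

lemma measureReal_Iic_le_integral_smoothTransition (x : ℝ) {ε : ℝ} (hε : 0 < ε) :
    ν.real (Iic x) ≤ ∫ t, smoothTransition ((x + ε - t) / ε) ∂ν := by
  rw [← integral_indicator_one measurableSet_Iic]
  refine integral_mono ((integrable_const 1).indicator measurableSet_Iic)
    (integrable_smoothTransition_comp ν (by fun_prop)) fun t => ?_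
  by_cases ht : t ∈ Iic x
  · rw [indicator_of_mem ht,
      smoothTransition.one_of_one_le ((le_div_iff₀ hε).2 (by linarith [mem_Iic.1 ht]))]
    rfl
  · rw [indicator_of_notMem ht]
    exact smoothTransition.nonneg _

lemma integral_smoothTransition_le_measureReal_Iic (x : ℝ) {ε : ℝ} (hε : 0 < ε) :
    ∫ t, smoothTransition ((x + ε - t) / ε) ∂ν ≤ ν.real (Iic (x + ε)) := by
  rw [← integral_indicator_one measurableSet_Iic]
  refine integral_mono (integrable_smoothTransition_comp ν (by fun_prop))
    ((integrable_const 1).indicator measurableSet_Iic) fun t => ?_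
  by_cases ht : t ∈ Iic (x + ε)
  · rw [indicator_of_mem ht]
    exact smoothTransition.le_one _
  · rw [indicator_of_notMem ht, smoothTransition.zero_of_nonpos
      (div_nonpos_of_nonpos_of_nonneg (by linarith [not_le.1 (mt mem_Iic.2 ht)]) hε.le)]

end Sandwich

lemma gaussianReal_le_volume (s : Set ℝ) : gaussianReal 0 1 s ≤ volume s := by
  rw [gaussianReal_apply 0 one_ne_zero, ← setLIntegral_one]
  refine lintegral_mono fun t => ENNReal.ofReal_le_one.2 ?_
  rw [gaussianPDFReal, NNReal.coe_one, mul_one]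
  refine mul_le_one₀ (inv_le_one_of_one_le₀ ?_) (exp_pos _).le (exp_le_one_iff.2 ?_)
  · rw [one_le_sqrt]
    nlinarith [pi_gt_three]
  · exact div_nonpos_of_nonpos_of_nonneg (neg_nonpos.2 (sq_nonneg _)) (by norm_num)

lemma gaussianReal_Iic_add_le (x : ℝ) {ε : ℝ} (hε : 0 ≤ ε) :
    (gaussianReal 0 1).real (Iic (x + ε)) ≤ (gaussianReal 0 1).real (Iic x) + ε := by
  have hIoc : (gaussianReal 0 1).real (Ioc x (x + ε)) ≤ ε := by
    calc (gaussianReal 0 1).real (Ioc x (x + ε)) ≤ volume.real (Ioc x (x + ε)) :=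
          ENNReal.toReal_mono measure_Ioc_lt_top.ne (gaussianReal_le_volume _)
      _ = ε := by rw [volume_real_Ioc_of_le (by linarith), add_sub_cancel_left]
  calc (gaussianReal 0 1).real (Iic (x + ε))
      ≤ (gaussianReal 0 1).real (Iic x) + (gaussianReal 0 1).real (Ioc x (x + ε)) := by
        rw [← Iic_union_Ioc_eq_Iic (by linarith : x ≤ x + ε)]
        exact measureReal_union_le _ _
    _ ≤ (gaussianReal 0 1).real (Iic x) + ε := by linarith

lemma abs_measureReal_Iic_sub_gaussianReal_le (μ : Measure ℝ) [IsFiniteMeasure μ] {K : ℝ}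
    (hK : 0 < K) (hbound : ∀ k ≤ 3, ∀ t, |iteratedDeriv k smoothTransition t| ≤ K)
    (x : ℝ) {ε : ℝ} (hε : 0 < ε) (hε1 : ε ≤ 1) :
    |μ.real (Iic x) - (gaussianReal 0 1).real (Iic x)| ≤ ε + K * dC3 μ / ε ^ 3 := by
  have hΔ : ∀ y, |(∫ t, smoothTransition ((y + ε - t) / ε) ∂μ)
      - ∫ t, smoothTransition ((y + ε - t) / ε) ∂(gaussianReal 0 1)| ≤ K * dC3 μ / ε ^ 3 := by
    intro y
    have hc : 1 ≤ |-ε⁻¹| := by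
      rw [abs_neg, abs_of_pos (inv_pos.2 hε)]
      exact one_le_inv₀ hε |>.2 hε1
    have h := abs_integral_sub_integral_le_mul_dC3 (μ := μ)
      (smoothTransition.contDiff.comp (by fun_prop)) (by positivity)
      (abs_iteratedDeriv_comp_mul_add_le smoothTransition.contDiff hbound hc ((y + ε) / ε))
    have hfun : (fun t => smoothTransition ((y + ε - t) / ε))
        = fun t => smoothTransition (-ε⁻¹ * t + (y + ε) / ε) := by
      funext t
      ring_nf
    have hM : |-ε⁻¹| ^ 3 * K * dC3 μ = K * dC3 μ / ε ^ 3 := by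
      rw [abs_neg, abs_of_pos (inv_pos.2 hε)]
      ring
    rw [hfun, ← hM]
    exact h
  rw [abs_sub_le_iff]
  constructor
  · have h₁ := measureReal_Iic_le_integral_smoothTransition μ x hε
    have h₂ := integral_smoothTransition_le_measureReal_Iic (gaussianReal 0 1) x hε
    have h₃ := gaussianReal_Iic_add_le x hε.le
    linarith [(abs_le.1 (hΔ x)).2]
  · have h₁ := gaussianReal_Iic_add_le (x - ε) hε.le
    have h₂ := measureReal_Iic_le_integral_smoothTransition (gaussianReal 0 1) (x - ε) hε
    have h₃ := integral_smoothTransition_le_measureReal_Iic μ (x - ε) hε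
    have h₄ := (abs_le.1 (hΔ (x - ε))).1
    simp only [sub_add_cancel] at h₁ h₂ h₃ h₄
    linarith

lemma le_mul_rpow_of_forall_le_add {D d K : ℝ} (hD : D ≤ 1) (hd : 0 ≤ d) (hK : 0 ≤ K)
    (h : ∀ ε, 0 < ε → ε ≤ 1 → D ≤ ε + K * d / ε ^ 3) :
    D ≤ (K + 1) * d ^ ((1 : ℝ) / 4) := by
  rcases hd.eq_or_lt with rfl | hd
  · rw [zero_rpow (by norm_num), mul_zero]
    refine le_of_forall_pos_le_add fun δ hδ => ?_
    have := h (min δ 1) (lt_min hδ one_pos) (min_le_right _ _)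
    rw [mul_zero, zero_div, add_zero] at this
    linarith [min_le_left δ 1]
  rcases lt_or_ge d 1 with hd1 | hd1
  · set ε := d ^ ((1 : ℝ) / 4)
    have hε : 0 < ε := rpow_pos_of_pos hd _
    have hdε : d = ε ^ 4 := by
      rw [← rpow_natCast, ← rpow_mul hd.le]
      norm_num
    have := h ε hε (rpow_le_one hd.le hd1.le (by norm_num))
    rw [hdε, mul_div_assoc, pow_succ, mul_div_cancel_left₀ _ (by positivity)] at this
    linarith
  · calc D ≤ 1 := hD
      _ ≤ d ^ ((1 : ℝ) / 4) := one_le_rpow hd1 (by norm_num)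
      _ ≤ (K + 1) * d ^ ((1 : ℝ) / 4) := le_mul_of_one_le_left (by positivity) (by linarith)

/-- **Kolmogorov distance controlled by the `C³` distance to the Gaussian.** There is a
universal constant `C > 0` such that for every Borel probability measure `μ` on `ℝ`,
`sup_x |μ((−∞,x]) − γ((−∞,x])| ≤ C · dC3(μ)^{1/4}`. -/
theorem kolmogorov_le_dC3 :
    ∃ C : ℝ, 0 < C ∧ ∀ μ : Measure ℝ, IsProbabilityMeasure μ →
      (⨆ x : ℝ, |(μ (Set.Iic x)).toReal - ((gaussianReal 0 1) (Set.Iic x)).toReal|)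
        ≤ C * (dC3 μ) ^ ((1 : ℝ) / 4) := by
  obtain ⟨K, hK, hbound⟩ := exists_bound_iteratedDeriv_smoothTransition 3
  refine ⟨K + 1, by positivity, fun μ _ => ciSup_le fun x => ?_⟩
  refine le_mul_rpow_of_forall_le_add ?_ (dC3_nonneg μ) hK.le
    fun ε hε hε1 => abs_measureReal_Iic_sub_gaussianReal_le μ hK hbound x hε hε1
  exact abs_sub_le_of_nonneg_of_le measureReal_nonneg measureReal_le_one measureReal_nonneg
    measureReal_le_one
end

section
/- (Second moment of the averaged cosine sum in terms of Fourier coefficients.) Let X and Y be i.i.d. random variables with values in [0,2π] and common law ℙ_X, and set ε_n := (1/n) ∑_{k=1}^n cos(k(X − Y)). Then for every n ≥ 1, E[ε_n²] = (1/(2n²)) ∑_{k=1}^n ∑_{l=1}^n ( |P̂(k+l)|² + |P̂(k−l)|² ), where P̂(m) := E[e^{imX}] denotes the m-th Fourier coefficient of ℙ_X (so that |P̂(0)| = 1). -/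
open MeasureTheory ProbabilityTheory Real

lemma my_integrable_of_bound {α : Type*} {m0 : MeasurableSpace α} {μ : Measure α}
    [IsFiniteMeasure μ] {f : α → ℝ} (hf : Measurable f) (C : ℝ) (hC : ∀ a, |f a| ≤ C) :
    Integrable f μ :=
  (integrable_const C).mono' hf.aestronglyMeasurable
    (Filter.Eventually.of_forall (by simpa using hC))

lemma my_key {Ω : Type*} [MeasureSpace Ω] [IsProbabilityMeasure (ℙ : Measure Ω)]
    (X Y : Ω → ℝ) (hX : Measurable X) (hY : Measurable Y)
    (hindep : IndepFun X Y ℙ) (μX : Measure ℝ) [IsProbabilityMeasure μX]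
    (hlawX : Measure.map X ℙ = μX) (hlawY : Measure.map Y ℙ = μX) (m : ℤ) :
    ∫ ω, Real.cos ((m:ℝ) * (X ω - Y ω)) ∂ℙ
      = ‖∫ x, Complex.exp (Complex.I * (m:ℂ) * (x:ℂ)) ∂μX‖ ^ 2 := by
  set a := ∫ x, Real.cos ((m:ℝ) * x) ∂μX with ha
  set b := ∫ x, Real.sin ((m:ℝ) * x) ∂μX with hb
  have hcosmeas : Measurable fun x : ℝ => Real.cos ((m:ℝ) * x) :=
    Real.measurable_cos.comp (measurable_const.mul measurable_id)
  have hsinmeas : Measurable fun x : ℝ => Real.sin ((m:ℝ) * x) :=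
    Real.measurable_sin.comp (measurable_const.mul measurable_id)
  have hcosint : Integrable (fun x : ℝ => Real.cos ((m:ℝ) * x)) μX :=
    my_integrable_of_bound hcosmeas 1 (fun x => Real.abs_cos_le_one _)
  have hsinint : Integrable (fun x : ℝ => Real.sin ((m:ℝ) * x)) μX :=
    my_integrable_of_bound hsinmeas 1 (fun x => Real.abs_sin_le_one _)
  -- RHS
  have hptC : ∀ x : ℝ, Complex.exp (Complex.I * (m:ℂ) * (x:ℂ))
      = (Real.cos ((m:ℝ) * x) : ℂ) + (Real.sin ((m:ℝ) * x) : ℂ) * Complex.I := by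
    intro x
    rw [show Complex.I * (m:ℂ) * (x:ℂ) = (((m:ℝ) * x : ℝ) : ℂ) * Complex.I by push_cast; ring,
      Complex.exp_mul_I, Complex.ofReal_cos, Complex.ofReal_sin]
  have h1 : Integrable (fun x : ℝ => ((Real.cos ((m:ℝ) * x) : ℝ) : ℂ)) μX := hcosint.ofReal
  have h2 : Integrable (fun x : ℝ => ((Real.sin ((m:ℝ) * x) : ℝ) : ℂ) * Complex.I) μX :=
    (hsinint.ofReal).mul_const Complex.I
  have h3 : (∫ x, ((Real.cos ((m:ℝ) * x) : ℝ) : ℂ) ∂μX)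
      = ((∫ x, Real.cos ((m:ℝ) * x) ∂μX : ℝ) : ℂ) := integral_ofReal
  have h4 : (∫ x, ((Real.sin ((m:ℝ) * x) : ℝ) : ℂ) ∂μX)
      = ((∫ x, Real.sin ((m:ℝ) * x) ∂μX : ℝ) : ℂ) := integral_ofReal
  have hRHS : (∫ x, Complex.exp (Complex.I * (m:ℂ) * (x:ℂ)) ∂μX) = (a:ℂ) + (b:ℂ) * Complex.I := by
    simp_rw [hptC]
    rw [integral_add h1 h2, integral_mul_const, h3, h4]
  have hnorm : ‖∫ x, Complex.exp (Complex.I * (m:ℂ) * (x:ℂ)) ∂μX‖ ^ 2 = a ^ 2 + b ^ 2 := by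
    rw [hRHS, Complex.norm_add_mul_I, Real.sq_sqrt (by positivity)]
  rw [hnorm]
  -- LHS
  have hpt : ∀ ω, Real.cos ((m:ℝ) * (X ω - Y ω)) =
      Real.cos ((m:ℝ) * X ω) * Real.cos ((m:ℝ) * Y ω)
        + Real.sin ((m:ℝ) * X ω) * Real.sin ((m:ℝ) * Y ω) := by
    intro ω; rw [mul_sub, Real.cos_sub]
  have hcX : Integrable (fun ω => Real.cos ((m:ℝ) * X ω)) ℙ :=
    my_integrable_of_bound (hcosmeas.comp hX) 1 (fun ω => Real.abs_cos_le_one _)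
  have hcY : Integrable (fun ω => Real.cos ((m:ℝ) * Y ω)) ℙ :=
    my_integrable_of_bound (hcosmeas.comp hY) 1 (fun ω => Real.abs_cos_le_one _)
  have hsX : Integrable (fun ω => Real.sin ((m:ℝ) * X ω)) ℙ :=
    my_integrable_of_bound (hsinmeas.comp hX) 1 (fun ω => Real.abs_sin_le_one _)
  have hsY : Integrable (fun ω => Real.sin ((m:ℝ) * Y ω)) ℙ :=
    my_integrable_of_bound (hsinmeas.comp hY) 1 (fun ω => Real.abs_sin_le_one _)
  have hccint : Integrable (fun ω => Real.cos ((m:ℝ) * X ω) * Real.cos ((m:ℝ) * Y ω)) ℙ :=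
    my_integrable_of_bound ((hcosmeas.comp hX).mul (hcosmeas.comp hY)) 1
      (fun ω => by rw [abs_mul]
                   exact mul_le_one₀ (Real.abs_cos_le_one _) (abs_nonneg _)
                     (Real.abs_cos_le_one _))
  have hssint : Integrable (fun ω => Real.sin ((m:ℝ) * X ω) * Real.sin ((m:ℝ) * Y ω)) ℙ :=
    my_integrable_of_bound ((hsinmeas.comp hX).mul (hsinmeas.comp hY)) 1
      (fun ω => by rw [abs_mul]
                   exact mul_le_one₀ (Real.abs_sin_le_one _) (abs_nonneg _)
                     (Real.abs_sin_le_one _))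
  have hindc : IndepFun (fun ω => Real.cos ((m:ℝ) * X ω)) (fun ω => Real.cos ((m:ℝ) * Y ω)) ℙ :=
    hindep.comp hcosmeas hcosmeas
  have hinds : IndepFun (fun ω => Real.sin ((m:ℝ) * X ω)) (fun ω => Real.sin ((m:ℝ) * Y ω)) ℙ :=
    hindep.comp hsinmeas hsinmeas
  have hmapcX : ∫ ω, Real.cos ((m:ℝ) * X ω) ∂ℙ = a := by
    rw [ha, ← hlawX, integral_map hX.aemeasurable hcosmeas.aestronglyMeasurable]
  have hmapcY : ∫ ω, Real.cos ((m:ℝ) * Y ω) ∂ℙ = a := by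
    rw [ha, ← hlawY, integral_map hY.aemeasurable hcosmeas.aestronglyMeasurable]
  have hmapsX : ∫ ω, Real.sin ((m:ℝ) * X ω) ∂ℙ = b := by
    rw [hb, ← hlawX, integral_map hX.aemeasurable hsinmeas.aestronglyMeasurable]
  have hmapsY : ∫ ω, Real.sin ((m:ℝ) * Y ω) ∂ℙ = b := by
    rw [hb, ← hlawY, integral_map hY.aemeasurable hsinmeas.aestronglyMeasurable]
  calc ∫ ω, Real.cos ((m:ℝ) * (X ω - Y ω)) ∂ℙ
      = ∫ ω, (Real.cos ((m:ℝ) * X ω) * Real.cos ((m:ℝ) * Y ω)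
          + Real.sin ((m:ℝ) * X ω) * Real.sin ((m:ℝ) * Y ω)) ∂ℙ := by simp_rw [hpt]
    _ = (∫ ω, Real.cos ((m:ℝ) * X ω) * Real.cos ((m:ℝ) * Y ω) ∂ℙ)
          + ∫ ω, Real.sin ((m:ℝ) * X ω) * Real.sin ((m:ℝ) * Y ω) ∂ℙ :=
        integral_add hccint hssint
    _ = a * a + b * b := by
        rw [hindc.integral_fun_mul_eq_mul_integral hcX.aestronglyMeasurable hcY.aestronglyMeasurable,
          hinds.integral_fun_mul_eq_mul_integral hsX.aestronglyMeasurable hsY.aestronglyMeasurable]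
        beta_reduce
        rw [hmapcX, hmapcY, hmapsX, hmapsY]
    _ = a ^ 2 + b ^ 2 := by ring

/-- **Second moment of the averaged cosine sum in terms of Fourier coefficients.**
If `X, Y` are i.i.d. with law `ℙ_X` on `[0,2π]` and
`ε_n = (1/n) ∑_{k=1}^n cos(k(X−Y))`, then
`E[ε_n²] = (1/(2n²)) ∑_{k,l=1}^n (|P̂(k+l)|² + |P̂(k−l)|²)`, where
`P̂(m) = E[e^{imX}]`. -/
theorem cosine_sum_second_moment
    {Ω : Type*} [MeasureSpace Ω] [IsProbabilityMeasure (ℙ : Measure Ω)]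
    (X Y : Ω → ℝ) (hX : Measurable X) (hY : Measurable Y)
    (hindep : IndepFun X Y ℙ)
    (μX : Measure ℝ) [IsProbabilityMeasure μX]
    (hsupp : μX (Set.Icc (0:ℝ) (2 * π))ᶜ = 0)
    (hlawX : Measure.map X ℙ = μX) (hlawY : Measure.map Y ℙ = μX) :
    ∀ n : ℕ, 1 ≤ n →
      (∫ ω, ((n : ℝ)⁻¹ * ∑ k ∈ Finset.Icc 1 n, Real.cos (k * (X ω - Y ω))) ^ 2 ∂ℙ) =
        (1 / (2 * (n : ℝ) ^ 2)) * ∑ k ∈ Finset.Icc 1 n, ∑ l ∈ Finset.Icc 1 n,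
          (‖∫ x, Complex.exp (Complex.I * (((k : ℤ) + (l : ℤ) : ℤ) : ℂ) * (x : ℂ)) ∂μX‖ ^ 2
            + ‖∫ x, Complex.exp (Complex.I * (((k : ℤ) - (l : ℤ) : ℤ) : ℂ) * (x : ℂ)) ∂μX‖ ^ 2) := by
  intro n hn
  have hd : Measurable fun ω => X ω - Y ω := hX.sub hY
  have hmeas : ∀ c : ℝ, Measurable fun ω => Real.cos (c * (X ω - Y ω)) := fun c =>
    Real.measurable_cos.comp (measurable_const.mul hd)
  have hint : ∀ c : ℝ, Integrable (fun ω => Real.cos (c * (X ω - Y ω))) ℙ := fun c =>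
    my_integrable_of_bound (hmeas c) 1 (fun ω => Real.abs_cos_le_one _)
  have hintmul : ∀ k l : ℕ, Integrable
      (fun ω => Real.cos ((k:ℝ) * (X ω - Y ω)) * Real.cos ((l:ℝ) * (X ω - Y ω))) ℙ := by
    intro k l
    exact my_integrable_of_bound ((hmeas _).mul (hmeas _)) 1
      (fun ω => by rw [abs_mul]
                   exact mul_le_one₀ (Real.abs_cos_le_one _) (abs_nonneg _)
                     (Real.abs_cos_le_one _))
  -- expand the square
  have hexp : ∀ ω, ((n : ℝ)⁻¹ * ∑ k ∈ Finset.Icc 1 n, Real.cos (k * (X ω - Y ω))) ^ 2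
      = ((n:ℝ)^2)⁻¹ * ∑ k ∈ Finset.Icc 1 n, ∑ l ∈ Finset.Icc 1 n,
          Real.cos ((k:ℝ) * (X ω - Y ω)) * Real.cos ((l:ℝ) * (X ω - Y ω)) := by
    intro ω
    rw [mul_pow, inv_pow,
      pow_two (∑ k ∈ Finset.Icc 1 n, Real.cos ((k:ℝ) * (X ω - Y ω))), Finset.sum_mul_sum]
  simp_rw [hexp]
  rw [integral_const_mul, integral_finset_sum _
    (fun k _ => integrable_finset_sum _ (fun l _ => hintmul k l))]
  have hswap : ∀ k ∈ Finset.Icc 1 n,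
      (∫ ω, ∑ l ∈ Finset.Icc 1 n,
          Real.cos ((k:ℝ) * (X ω - Y ω)) * Real.cos ((l:ℝ) * (X ω - Y ω)) ∂ℙ)
        = ∑ l ∈ Finset.Icc 1 n,
            ∫ ω, Real.cos ((k:ℝ) * (X ω - Y ω)) * Real.cos ((l:ℝ) * (X ω - Y ω)) ∂ℙ := by
    intro k _
    exact integral_finset_sum _ (fun l _ => hintmul k l)
  rw [Finset.sum_congr rfl hswap]
  have hterm : ∀ k l : ℕ,
      (∫ ω, Real.cos ((k:ℝ) * (X ω - Y ω)) * Real.cos ((l:ℝ) * (X ω - Y ω)) ∂ℙ)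
        = (‖∫ x, Complex.exp (Complex.I * (((k : ℤ) + (l : ℤ) : ℤ) : ℂ) * (x : ℂ)) ∂μX‖ ^ 2
            + ‖∫ x, Complex.exp (Complex.I * (((k : ℤ) - (l : ℤ) : ℤ) : ℂ) * (x : ℂ)) ∂μX‖ ^ 2)
            / 2 := by
    intro k l
    have hpt : ∀ ω, Real.cos ((k:ℝ) * (X ω - Y ω)) * Real.cos ((l:ℝ) * (X ω - Y ω))
        = Real.cos ((((k:ℤ) + (l:ℤ) : ℤ):ℝ) * (X ω - Y ω)) / 2
          + Real.cos ((((k:ℤ) - (l:ℤ) : ℤ):ℝ) * (X ω - Y ω)) / 2 := by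
      intro ω
      push_cast
      rw [add_mul, sub_mul, Real.cos_add, Real.cos_sub]
      ring
    simp_rw [hpt]
    rw [integral_add ((hint _).div_const 2) ((hint _).div_const 2),
      integral_div, integral_div,
      my_key X Y hX hY hindep μX hlawX hlawY ((k:ℤ) + (l:ℤ)),
      my_key X Y hX hY hindep μX hlawX hlawY ((k:ℤ) - (l:ℤ))]
    ring
  rw [Finset.sum_congr rfl (fun k _ => Finset.sum_congr rfl (fun l _ => hterm k l))]
  rw [Finset.mul_sum]
  rw [one_div, mul_inv, Finset.mul_sum]
  congr 1
  ext k
  rw [Finset.mul_sum, Finset.mul_sum]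
  congr 1
  ext l
  ring
end
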